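/- (Symplectic property of the Hermitian chain) For every E ∈ ℂ: T(Ē)†·Σ_n·T(E) = Σ_n, where Ē is the complex conjugate of E and † denotes the conjugate transpose. -/

import Mathlib

/-! Each step is symplectic from one form to the next: if `A` is Hermitian and `B` invertible,
`t(Ē)ᴴ · ω(B) · t(E) = ω(Cᴴ)` with `ω(X) = sympForm X = i·[[0, -Xᴴ], [X, 0]]`.
In the Hermitian chain `C_kᴴ = B_{k-1}` (cyclically, so `C_1ᴴ = B_n`), hence the product over the
chain telescopes from `ω(B_n) = Σ_n` back to `ω(B_n)`. -/

open Matrix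

noncomputable def tstep {m : ℕ} (A B C : Matrix (Fin m) (Fin m) ℂ) (E : ℂ) :
    Matrix (Fin m ⊕ Fin m) (Fin m ⊕ Fin m) ℂ :=
  Matrix.fromBlocks (B⁻¹ * (E • 1 - A)) (-(B⁻¹ * C)) 1 0

/-- The transfer matrix `T(E) = t_n(E) ⋯ t_1(E)` (0-indexed: `t_{n-1} ⋯ t_0`). -/
noncomputable def transfer {n m : ℕ} (A B C : Fin n → Matrix (Fin m) (Fin m) ℂ) (E : ℂ) :
    Matrix (Fin m ⊕ Fin m) (Fin m ⊕ Fin m) ℂ :=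
  ((List.ofFn fun k : Fin n => tstep (A k) (B k) (C k) E).reverse).prod

/-- For the Hermitian chain: `C_k = B_{k-1}ᴴ` for `k = 2,…,n` and `C_1 = B_nᴴ`
(indices cyclically shifted, `0`-indexed). -/
noncomputable def hermC {n m : ℕ} (hn : 0 < n) (B : Fin n → Matrix (Fin m) (Fin m) ℂ) :
    Fin n → Matrix (Fin m) (Fin m) ℂ :=
  fun k => (B ⟨((k : ℕ) + (n - 1)) % n, Nat.mod_lt _ hn⟩)ᴴ

/-- The symplectic form `Σ_n = i·[[0, -B_nᴴ],[B_n, 0]]`. -/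
noncomputable def SigmaN {n m : ℕ} (hn : 0 < n) (B : Fin n → Matrix (Fin m) (Fin m) ℂ) :
    Matrix (Fin m ⊕ Fin m) (Fin m ⊕ Fin m) ℂ :=
  Complex.I • Matrix.fromBlocks 0 (-(B ⟨n - 1, by omega⟩)ᴴ) (B ⟨n - 1, by omega⟩) 0

noncomputable def sympForm {m : ℕ} (X : Matrix (Fin m) (Fin m) ℂ) :
    Matrix (Fin m ⊕ Fin m) (Fin m ⊕ Fin m) ℂ :=
  Complex.I • fromBlocks 0 (-Xᴴ) X 0

theorem tstep_conjTranspose_mul_sympForm_mul {m : ℕ} {A B : Matrix (Fin m) (Fin m) ℂ}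
    (hA : A.IsHermitian) (hB : IsUnit B) (C : Matrix (Fin m) (Fin m) ℂ) (E : ℂ) :
    (tstep A B C (starRingEnd ℂ E))ᴴ * sympForm B * tstep A B C E = sympForm Cᴴ := by
  have hBB : B * B⁻¹ = 1 := mul_nonsing_inv _ ((isUnit_iff_isUnit_det _).mp hB)
  have hBB' : B⁻¹ᴴ * Bᴴ = 1 := by rw [← conjTranspose_mul, hBB, conjTranspose_one]
  have hEA : ((starRingEnd ℂ E) • (1 : Matrix (Fin m) (Fin m) ℂ) - A)ᴴ = E • 1 - A := by
    simp [conjTranspose_smul, hA.eq]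
  rw [tstep, tstep, sympForm, sympForm, Matrix.mul_smul, Matrix.smul_mul]
  congr 1
  rw [fromBlocks_conjTranspose, fromBlocks_multiply, fromBlocks_multiply]
  simp only [conjTranspose_mul, conjTranspose_neg, hEA, Matrix.mul_zero, Matrix.zero_mul,
    Matrix.mul_one, Matrix.one_mul, Matrix.mul_neg, Matrix.neg_mul, neg_neg, add_zero, zero_add,
    conjTranspose_zero, conjTranspose_one, conjTranspose_conjTranspose]
  rw [← Matrix.mul_assoc B, hBB, Matrix.one_mul, Matrix.mul_assoc _ B⁻¹ᴴ, hBB', Matrix.mul_one,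
    add_neg_cancel, ← Matrix.mul_assoc B, hBB, Matrix.one_mul, Matrix.mul_assoc Cᴴ, hBB',
    Matrix.mul_one, neg_zero]

theorem star_prod_mul_mul_prod_of_telescope {M : Type*} [Monoid M] [StarMul M] :
    ∀ {n : ℕ} (u v : Fin n → M) (S : ℕ → M),
      (∀ k : Fin n, star (u k) * S (k + 1) * v k = S k) →
      star (List.ofFn u).reverse.prod * S n * (List.ofFn v).reverse.prod = S 0
  | 0, _, _, _, _ => by simp
  | n + 1, u, v, S, h => by
    have ih := star_prod_mul_mul_prod_of_telescope (fun k => u k.castSucc)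
      (fun k => v k.castSucc) S (fun k => h k.castSucc)
    have hlast := h (Fin.last n)
    simp only [Fin.val_last] at hlast
    simp only [List.ofFn_succ', List.concat_eq_append, List.reverse_append, List.reverse_singleton,
      List.singleton_append, List.prod_cons, star_mul]
    calc _ = star (List.ofFn fun k => u k.castSucc).reverse.prod *
          (star (u (Fin.last n)) * S (n + 1) * v (Fin.last n)) *
          (List.ofFn fun k => v k.castSucc).reverse.prod := by simp only [mul_assoc]
      _ = S 0 := by rw [hlast, ih]

/-- Symplectic property of the transfer matrix of the Hermitian chain:
`T(Ē)ᴴ · Σ_n · T(E) = Σ_n`. -/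
theorem stmt16 {n m : ℕ} (hn : 2 ≤ n)
    (A B : Fin n → Matrix (Fin m) (Fin m) ℂ)
    (hA : ∀ k, (A k).IsHermitian) (hB : ∀ k, IsUnit (B k)) (E : ℂ) :
    (transfer A B (hermC (by omega) B) (starRingEnd ℂ E))ᴴ * SigmaN (by omega : 0 < n) B *
        transfer A B (hermC (by omega) B) E =
      SigmaN (by omega : 0 < n) B := by
  have hn0 : 0 < n := by omega
  let S : ℕ → Matrix (Fin m ⊕ Fin m) (Fin m ⊕ Fin m) ℂ :=
    fun j => sympForm (B ⟨(j + (n - 1)) % n, Nat.mod_lt _ hn0⟩)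
  have hS_of_mod : ∀ j, j % n = 0 → S j = SigmaN hn0 B := fun j hj => by
    have : (j + (n - 1)) % n = n - 1 := by rw [Nat.add_mod, hj, zero_add, Nat.mod_mod,
      Nat.mod_eq_of_lt (by omega)]
    simp only [S, sympForm, SigmaN, this]
  have hS_succ : ∀ k : Fin n, S (k + 1) = sympForm (B k) := fun k => by
    have : (k + 1 + (n - 1)) % n = k := by
      rw [show (k : ℕ) + 1 + (n - 1) = k + n by omega, Nat.add_mod_right, Nat.mod_eq_of_lt k.isLt]
    simp only [S, this]
  have hstep : ∀ k : Fin n, star (tstep (A k) (B k) (hermC hn0 B k) (starRingEnd ℂ E)) *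
      S (k + 1) * tstep (A k) (B k) (hermC hn0 B k) E = S k := fun k => by
    rw [star_eq_conjTranspose, hS_succ, tstep_conjTranspose_mul_sympForm_mul (hA k) (hB k),
      hermC, conjTranspose_conjTranspose]
  have htelescope := star_prod_mul_mul_prod_of_telescope _ _ S hstep
  rwa [hS_of_mod n (Nat.mod_self n), hS_of_mod 0 (Nat.zero_mod n), star_eq_conjTranspose]
    at htelescope
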